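/- arXiv:math/0607135 — 7 statements merged into one kernel-verified Lean document; each statement's English description precedes it below -/
import Mathlib

section
/- Assume (A0): aᵢⱼ > 0 for all i,j ∈ {1,2} and b₁, b₂ > 0. Let λ > 0, α ∈ [0,1], τ > 0, and let x₁, x₂ : ℝ → ℝ be continuously differentiable 2π-periodic functions with ∫₀^{2π} xᵢ(t) dt = 0 and xᵢ(t) > −bᵢ for all t (i = 1,2), satisfying x₁'(t) = −αλ(a₁₁x₁(t−τ/λ) + a₁₂x₂(t−τ/λ))(b₁ + x₁(t)) and x₂'(t) = −αλ(a₂₁x₁(t−τ/λ) + a₂₂x₂(t−τ/λ))(b₂ + x₂(t)) for all t ∈ ℝ. Then for all t ∈ ℝ: x₁(t) < b₁·exp(2πλ(a₁₁b₁ + a₁₂b₂)) − b₁ and x₂(t) < b₂·exp(2πλ(a₂₁b₁ + a₂₂b₂)) − b₂. -/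
/-!
Along a solution, `log (bᵢ + xᵢ)` has derivative `-αλ (aᵢ₁ x₁(t - τ/λ) + aᵢ₂ x₂(t - τ/λ))`, which
the lower bounds `xⱼ > -bⱼ` cap by `λ (aᵢ₁ b₁ + aᵢ₂ b₂)`. A zero-mean periodic function is
nonpositive somewhere in every period, so `bᵢ + xᵢ(t)` is reached from a value at most `bᵢ` in
time less than `2π`, during which it grows by a factor less than `exp (2πλ (aᵢ₁ b₁ + aᵢ₂ b₂))`.
-/

open Real Set

lemma Function.Periodic.exists_nonpos_mem_Ioc {x : ℝ → ℝ} {T : ℝ} (hp : Function.Periodic x T)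
    (hT : 0 < T) (hx : Continuous x) (hm : ∫ t in (0:ℝ)..T, x t = 0) (t : ℝ) :
    ∃ s ∈ Ioc (t - T) t, x s ≤ 0 := by
  obtain ⟨s, hs⟩ : ∃ s, x s ≤ 0 := by
    by_contra! hpos
    exact (intervalIntegral.intervalIntegral_pos_of_pos (hx.intervalIntegrable _ _) hpos hT).ne'
      hm
  obtain ⟨r, hr, hxr⟩ := hp.exists_mem_Ioc hT s (t - T)
  rw [sub_add_cancel] at hr
  exact ⟨r, hr, hxr ▸ hs⟩

lemma le_mul_exp_of_deriv_le_mul {y : ℝ → ℝ} {M : ℝ} (hy : Differentiable ℝ y)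
    (hpos : ∀ t, 0 < y t) (hder : ∀ t, deriv y t ≤ M * y t) {s t : ℝ} (hst : s ≤ t) :
    y t ≤ y s * exp (M * (t - s)) := by
  have hlog_deriv : ∀ u, deriv (fun u => log (y u)) u ≤ M := fun u => by
    rw [deriv.log (hy u) (hpos u).ne', div_le_iff₀ (hpos u)]
    exact hder u
  have hlog := image_sub_le_mul_sub_of_deriv_le (hy.log fun u => (hpos u).ne') hlog_deriv hst
  calc y t = exp (log (y t)) := (exp_log (hpos t)).symm
    _ ≤ exp (log (y s) + M * (t - s)) := exp_le_exp.mpr (by linarith)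
    _ = y s * exp (M * (t - s)) := by rw [exp_add, exp_log (hpos s)]

lemma lt_mul_exp_sub_of_deriv_le_of_periodic {x : ℝ → ℝ} {b M T : ℝ} (hT : 0 < T) (hM : 0 < M)
    (hx : Differentiable ℝ x) (hp : Function.Periodic x T) (hm : ∫ t in (0:ℝ)..T, x t = 0)
    (hpos : ∀ t, 0 < b + x t) (hder : ∀ t, deriv x t ≤ M * (b + x t)) (t : ℝ) :
    x t < b * exp (T * M) - b := by
  obtain ⟨s, ⟨hts, hst⟩, hxs⟩ := hp.exists_nonpos_mem_Ioc hT hx.continuous hm t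
  have hgrowth : b + x t ≤ (b + x s) * exp (M * (t - s)) :=
    le_mul_exp_of_deriv_le_mul (y := fun u => b + x u) (hx.const_add b) hpos
      (fun u => by simpa only [deriv_const_add] using hder u) hst
  have hexp : exp (M * (t - s)) < exp (T * M) := exp_lt_exp.mpr (by nlinarith)
  have : (b + x s) * exp (M * (t - s)) < b * exp (T * M) := calc
    _ < (b + x s) * exp (T * M) := mul_lt_mul_of_pos_left hexp (hpos s)
    _ ≤ b * exp (T * M) := mul_le_mul_of_nonneg_right (by linarith) (exp_pos _).le
  linarith

lemma neg_mul_mul_add_le {α lam a c b₁ b₂ y₁ y₂ : ℝ} (hα : α ∈ Icc (0:ℝ) 1) (hlam : 0 ≤ lam)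
    (ha : 0 ≤ a) (hc : 0 ≤ c) (hb₁ : 0 ≤ b₁) (hb₂ : 0 ≤ b₂) (hy₁ : -b₁ < y₁) (hy₂ : -b₂ < y₂) :
    -(α * lam) * (a * y₁ + c * y₂) ≤ lam * (a * b₁ + c * b₂) := by
  obtain ⟨hα0, hα1⟩ := hα
  have hsum : -(a * y₁ + c * y₂) ≤ a * b₁ + c * b₂ := by nlinarith
  calc -(α * lam) * (a * y₁ + c * y₂) = α * lam * -(a * y₁ + c * y₂) := by ring
    _ ≤ α * lam * (a * b₁ + c * b₂) := by gcongr
    _ ≤ 1 * lam * (a * b₁ + c * b₂) := by gcongr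
    _ = lam * (a * b₁ + c * b₂) := by rw [one_mul]

theorem lotka_volterra_apriori_upper_bound_general
    (a11 a12 a21 a22 b1 b2 lam α τ : ℝ)
    (hA0 : 0 < a11 ∧ 0 < a12 ∧ 0 < a21 ∧ 0 < a22)
    (hb1 : 0 < b1) (hb2 : 0 < b2)
    (hlam : 0 < lam) (hα : α ∈ Set.Icc (0:ℝ) 1)
    (x1 x2 : ℝ → ℝ) (hx1 : ContDiff ℝ 1 x1) (hx2 : ContDiff ℝ 1 x2)
    (hp1 : Function.Periodic x1 (2 * π)) (hp2 : Function.Periodic x2 (2 * π))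
    (hm1 : (∫ t in (0:ℝ)..(2 * π), x1 t) = 0)
    (hm2 : (∫ t in (0:ℝ)..(2 * π), x2 t) = 0)
    (hb1' : ∀ t : ℝ, -b1 < x1 t) (hb2' : ∀ t : ℝ, -b2 < x2 t)
    (heq1 : ∀ t : ℝ, deriv x1 t =
      -(α * lam) * (a11 * x1 (t - τ / lam) + a12 * x2 (t - τ / lam))
        * (b1 + x1 t))
    (heq2 : ∀ t : ℝ, deriv x2 t =
      -(α * lam) * (a21 * x1 (t - τ / lam) + a22 * x2 (t - τ / lam))
        * (b2 + x2 t)) :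
    ∀ t : ℝ,
      x1 t < b1 * Real.exp (2 * π * lam * (a11 * b1 + a12 * b2)) - b1 ∧
      x2 t < b2 * Real.exp (2 * π * lam * (a21 * b1 + a22 * b2)) - b2 := by
  obtain ⟨ha11, ha12, ha21, ha22⟩ := hA0
  have hpos1 : ∀ t, 0 < b1 + x1 t := fun t => by linarith [hb1' t]
  have hpos2 : ∀ t, 0 < b2 + x2 t := fun t => by linarith [hb2' t]
  intro t
  rw [mul_assoc (2 * π), mul_assoc (2 * π)]
  constructor
  · refine lt_mul_exp_sub_of_deriv_le_of_periodic two_pi_pos (by positivity)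
      (hx1.differentiable one_ne_zero) hp1 hm1 hpos1 (fun s => ?_) t
    rw [heq1 s]
    exact mul_le_mul_of_nonneg_right (neg_mul_mul_add_le hα hlam.le ha11.le ha12.le hb1.le hb2.le
      (hb1' _) (hb2' _)) (hpos1 s).le
  · refine lt_mul_exp_sub_of_deriv_le_of_periodic two_pi_pos (by positivity)
      (hx2.differentiable one_ne_zero) hp2 hm2 hpos2 (fun s => ?_) t
    rw [heq2 s]
    exact mul_le_mul_of_nonneg_right (neg_mul_mul_add_le hα hlam.le ha21.le ha22.le hb1.le hb2.le
      (hb1' _) (hb2' _)) (hpos2 s).le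

/-- A priori upper bounds for solutions of the parametrized system (PA). -/
theorem lotka_volterra_apriori_upper_bound
    (a11 a12 a21 a22 b1 b2 lam α τ : ℝ)
    (hA0 : 0 < a11 ∧ 0 < a12 ∧ 0 < a21 ∧ 0 < a22)
    (hb1 : 0 < b1) (hb2 : 0 < b2)
    (hlam : 0 < lam) (hα : α ∈ Set.Icc (0:ℝ) 1) (hτ : 0 < τ)
    (x1 x2 : ℝ → ℝ) (hx1 : ContDiff ℝ 1 x1) (hx2 : ContDiff ℝ 1 x2)
    (hp1 : Function.Periodic x1 (2 * π)) (hp2 : Function.Periodic x2 (2 * π))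
    (hm1 : (∫ t in (0:ℝ)..(2 * π), x1 t) = 0)
    (hm2 : (∫ t in (0:ℝ)..(2 * π), x2 t) = 0)
    (hb1' : ∀ t : ℝ, -b1 < x1 t) (hb2' : ∀ t : ℝ, -b2 < x2 t)
    (heq1 : ∀ t : ℝ, deriv x1 t =
      -(α * lam) * (a11 * x1 (t - τ / lam) + a12 * x2 (t - τ / lam))
        * (b1 + x1 t))
    (heq2 : ∀ t : ℝ, deriv x2 t =
      -(α * lam) * (a21 * x1 (t - τ / lam) + a22 * x2 (t - τ / lam))
        * (b2 + x2 t)) :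
    ∀ t : ℝ,
      x1 t < b1 * Real.exp (2 * π * lam * (a11 * b1 + a12 * b2)) - b1 ∧
      x2 t < b2 * Real.exp (2 * π * lam * (a21 * b1 + a22 * b2)) - b2 :=
  lotka_volterra_apriori_upper_bound_general a11 a12 a21 a22 b1 b2 lam α τ hA0 hb1 hb2 hlam hα x1 x2
    hx1 hx2 hp1 hp2 hm1 hm2 hb1' hb2' heq1 heq2
end

section
/- Assume (A0): aᵢⱼ > 0 for all i,j ∈ {1,2} and b₁, b₂ > 0. Let λ > 0, α ∈ [0,1], τ > 0, and let x₁, x₂ : ℝ → ℝ be continuously differentiable 2π-periodic functions with ∫₀^{2π} xᵢ(t) dt = 0 and xᵢ(t) > −bᵢ for all t (i = 1,2), satisfying x₁'(t) = −αλ(a₁₁x₁(t−τ/λ) + a₁₂x₂(t−τ/λ))(b₁ + x₁(t)) and x₂'(t) = −αλ(a₂₁x₁(t−τ/λ) + a₂₂x₂(t−τ/λ))(b₂ + x₂(t)) for all t ∈ ℝ. Set d₃ = b₁·exp(2πλ(a₁₁b₁ + a₁₂b₂)) − b₁ and d₄ = b₂·exp(2πλ(a₂₁b₁ + a₂₂b₂))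 − b₂. Then for all t ∈ ℝ: x₁(t) > b₁·exp(−2πλ(a₁₁d₃ + a₁₂d₄)) − b₁ > −b₁ and x₂(t) > b₂·exp(−2πλ(a₂₁d₃ + a₂₂d₄)) − b₂ > −b₂. -/
/-!
Along a solution, `log (bᵢ + xᵢ)` has derivative `gᵢ(t) = -αλ (aᵢ₁ x₁ + aᵢ₂ x₂)(t - τ/λ)`, and a
mean-zero periodic `xᵢ` vanishes somewhere in every window `(t - 2π, t]`. Integrating from that
zero to `t` turns a bound `|gᵢ| ≤ C` into `bᵢ e^{-2πC} - bᵢ < xᵢ(t) < bᵢ e^{2πC} - bᵢ`. The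
constraint `xⱼ > -bⱼ` bounds `gᵢ` from above, which gives `x₁ < d₃` and `x₂ < d₄`; these upper
bounds in turn bound `gᵢ` from below, which gives the lower bounds.
-/

open Real Set

theorem exists_eq_zero_of_intervalIntegral_eq_zero {f : ℝ → ℝ} {a b : ℝ} (hab : a ≠ b)
    (hf : ContinuousOn f (uIcc a b)) (h : ∫ t in a..b, f t = 0) :
    ∃ c ∈ uIoo a b, f c = 0 := by
  obtain ⟨c, hc, hfc⟩ := exists_eq_interval_average hab hf
  exact ⟨c, hc, by rw [hfc, interval_average_eq_div, h, zero_div]⟩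

theorem neg_mul_le_mul_of_neg_le {k m w S : ℝ} (hk : 0 ≤ k) (hkm : k ≤ m) (hS : 0 ≤ S)
    (hw : -S ≤ w) : -k * w ≤ m * S := by
  nlinarith

theorem neg_mul_le_neg_mul_of_le {k m w S : ℝ} (hk : 0 ≤ k) (hkm : k ≤ m) (hS : 0 ≤ S)
    (hw : w ≤ S) : -(m * S) ≤ -k * w := by
  nlinarith

section LogarithmicGrowth

variable {b C : ℝ} {x g : ℝ → ℝ}

theorem hasDerivAt_log_add_of_deriv_eq_mul (hx : Differentiable ℝ x) (hpos : ∀ t, 0 < b + x t)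
    (hode : ∀ t, deriv x t = g t * (b + x t)) (t : ℝ) :
    HasDerivAt (fun u => log (b + x u)) (g t) t := by
  have h := ((hx t).hasDerivAt.const_add b).log (hpos t).ne'
  rwa [hode t, mul_div_cancel_right₀ _ (hpos t).ne'] at h

theorem add_le_mul_exp_of_deriv_eq_mul (hx : Differentiable ℝ x) (hpos : ∀ t, 0 < b + x t)
    (hode : ∀ t, deriv x t = g t * (b + x t)) (hg : ∀ t, g t ≤ C) {s t : ℝ} (hst : s ≤ t) :
    b + x t ≤ (b + x s) * exp (C * (t - s)) := by
  have hlog := hasDerivAt_log_add_of_deriv_eq_mul hx hpos hode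
  have hmvt := image_sub_le_mul_sub_of_deriv_le (fun u => (hlog u).differentiableAt)
    (fun u => (hlog u).deriv ▸ hg u) hst
  calc b + x t = exp (log (b + x t)) := (exp_log (hpos t)).symm
    _ ≤ exp (log (b + x s) + C * (t - s)) := exp_le_exp.2 (by linarith)
    _ = (b + x s) * exp (C * (t - s)) := by rw [exp_add, exp_log (hpos s)]

theorem mul_exp_le_add_of_deriv_eq_mul (hx : Differentiable ℝ x) (hpos : ∀ t, 0 < b + x t)
    (hode : ∀ t, deriv x t = g t * (b + x t)) (hg : ∀ t, C ≤ g t) {s t : ℝ} (hst : s ≤ t) :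
    (b + x s) * exp (C * (t - s)) ≤ b + x t := by
  have hlog := hasDerivAt_log_add_of_deriv_eq_mul hx hpos hode
  have hmvt := mul_sub_le_image_sub_of_le_deriv (fun u => (hlog u).differentiableAt)
    (fun u => (hlog u).deriv ▸ hg u) hst
  calc (b + x s) * exp (C * (t - s)) = exp (log (b + x s) + C * (t - s)) := by
        rw [exp_add, exp_log (hpos s)]
    _ ≤ exp (log (b + x t)) := exp_le_exp.2 (by linarith)
    _ = b + x t := exp_log (hpos t)

variable {p s : ℝ}

theorem Function.Periodic.lt_mul_exp_sub_of_deriv_eq_mul (hp : Function.Periodic x p)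
    (hp0 : 0 < p) (hs : x s = 0) (hx : Differentiable ℝ x) (hpos : ∀ t, 0 < b + x t)
    (hode : ∀ t, deriv x t = g t * (b + x t)) (hC : 0 < C) (hg : ∀ t, g t ≤ C) (t : ℝ) :
    x t < b * exp (p * C) - b := by
  obtain ⟨t₀, ⟨ht₀, ht₀'⟩, hxt₀⟩ := hp.exists_mem_Ioc hp0 s (t - p)
  have hb : 0 < b := by simpa [hs] using hpos s
  have hgrowth := add_le_mul_exp_of_deriv_eq_mul hx hpos hode hg (by linarith : t₀ ≤ t)
  rw [← hxt₀, hs, add_zero] at hgrowth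
  have hexp : exp (C * (t - t₀)) < exp (p * C) := exp_lt_exp.2 (by nlinarith)
  nlinarith

theorem Function.Periodic.mul_exp_sub_lt_of_deriv_eq_mul (hp : Function.Periodic x p)
    (hp0 : 0 < p) (hs : x s = 0) (hx : Differentiable ℝ x) (hpos : ∀ t, 0 < b + x t)
    (hode : ∀ t, deriv x t = g t * (b + x t)) (hC : 0 < C) (hg : ∀ t, -C ≤ g t) (t : ℝ) :
    b * exp (-(p * C)) - b < x t := by
  obtain ⟨t₀, ⟨ht₀, ht₀'⟩, hxt₀⟩ := hp.exists_mem_Ioc hp0 s (t - p)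
  have hb : 0 < b := by simpa [hs] using hpos s
  have hdecay := mul_exp_le_add_of_deriv_eq_mul hx hpos hode hg (by linarith : t₀ ≤ t)
  rw [← hxt₀, hs, add_zero] at hdecay
  have hexp : exp (-(p * C)) < exp (-C * (t - t₀)) := exp_lt_exp.2 (by nlinarith)
  nlinarith

end LogarithmicGrowth

theorem lotka_volterra_apriori_lower_bound_general
    (a11 a12 a21 a22 b1 b2 lam α τ : ℝ)
    (hA0 : 0 < a11 ∧ 0 < a12 ∧ 0 < a21 ∧ 0 < a22)
    (hb1 : 0 < b1) (hb2 : 0 < b2)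
    (hlam : 0 < lam) (hα : α ∈ Set.Icc (0:ℝ) 1)
    (x1 x2 : ℝ → ℝ) (hx1 : ContDiff ℝ 1 x1) (hx2 : ContDiff ℝ 1 x2)
    (hp1 : Function.Periodic x1 (2 * π)) (hp2 : Function.Periodic x2 (2 * π))
    (hm1 : (∫ t in (0:ℝ)..(2 * π), x1 t) = 0)
    (hm2 : (∫ t in (0:ℝ)..(2 * π), x2 t) = 0)
    (hb1' : ∀ t : ℝ, -b1 < x1 t) (hb2' : ∀ t : ℝ, -b2 < x2 t)
    (heq1 : ∀ t : ℝ, deriv x1 t =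
      -(α * lam) * (a11 * x1 (t - τ / lam) + a12 * x2 (t - τ / lam))
        * (b1 + x1 t))
    (heq2 : ∀ t : ℝ, deriv x2 t =
      -(α * lam) * (a21 * x1 (t - τ / lam) + a22 * x2 (t - τ / lam))
        * (b2 + x2 t))
    (d3 d4 : ℝ)
    (hd3 : d3 = b1 * Real.exp (2 * π * lam * (a11 * b1 + a12 * b2)) - b1)
    (hd4 : d4 = b2 * Real.exp (2 * π * lam * (a21 * b1 + a22 * b2)) - b2) :
    ∀ t : ℝ,
      (x1 t > b1 * Real.exp (-(2 * π * lam * (a11 * d3 + a12 * d4))) - b1 ∧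
        b1 * Real.exp (-(2 * π * lam * (a11 * d3 + a12 * d4))) - b1 > -b1) ∧
      (x2 t > b2 * Real.exp (-(2 * π * lam * (a21 * d3 + a22 * d4))) - b2 ∧
        b2 * Real.exp (-(2 * π * lam * (a21 * d3 + a22 * d4))) - b2 > -b2) := by
  obtain ⟨ha11, ha12, ha21, ha22⟩ := hA0
  have hk : 0 ≤ α * lam := mul_nonneg hα.1 hlam.le
  have hkm : α * lam ≤ lam := mul_le_of_le_one_left hlam.le hα.2
  have hd1 := hx1.differentiable one_ne_zero
  have hd2 := hx2.differentiable one_ne_zero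
  have hpos1 : ∀ t, 0 < b1 + x1 t := fun t => neg_lt_iff_pos_add'.1 (hb1' t)
  have hpos2 : ∀ t, 0 < b2 + x2 t := fun t => neg_lt_iff_pos_add'.1 (hb2' t)
  obtain ⟨s1, -, hs1⟩ := exists_eq_zero_of_intervalIntegral_eq_zero two_pi_pos.ne
    hx1.continuous.continuousOn hm1
  obtain ⟨s2, -, hs2⟩ := exists_eq_zero_of_intervalIntegral_eq_zero two_pi_pos.ne
    hx2.continuous.continuousOn hm2
  have hu1 : ∀ t, x1 t < d3 := fun t => by
    rw [hd3, mul_assoc (2 * π)]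
    exact hp1.lt_mul_exp_sub_of_deriv_eq_mul two_pi_pos hs1 hd1 hpos1 heq1 (by positivity)
      (fun s => neg_mul_le_mul_of_neg_le hk hkm (by positivity)
        (by nlinarith [hb1' (s - τ / lam), hb2' (s - τ / lam)])) t
  have hu2 : ∀ t, x2 t < d4 := fun t => by
    rw [hd4, mul_assoc (2 * π)]
    exact hp2.lt_mul_exp_sub_of_deriv_eq_mul two_pi_pos hs2 hd2 hpos2 heq2 (by positivity)
      (fun s => neg_mul_le_mul_of_neg_le hk hkm (by positivity)
        (by nlinarith [hb1' (s - τ / lam), hb2' (s - τ / lam)])) t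
  have hd3pos : 0 < d3 := hs1 ▸ hu1 s1
  have hd4pos : 0 < d4 := hs2 ▸ hu2 s2
  have neg_lt : ∀ {b : ℝ} (y : ℝ), 0 < b → -b < b * exp y - b := fun y hb => by
    linarith [mul_pos hb (exp_pos y)]
  intro t
  refine ⟨⟨?_, neg_lt _ hb1⟩, ⟨?_, neg_lt _ hb2⟩⟩
  · rw [mul_assoc (2 * π)]
    exact hp1.mul_exp_sub_lt_of_deriv_eq_mul two_pi_pos hs1 hd1 hpos1 heq1 (by positivity)
      (fun s => neg_mul_le_neg_mul_of_le hk hkm (by positivity)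
        (by nlinarith [hu1 (s - τ / lam), hu2 (s - τ / lam)])) t
  · rw [mul_assoc (2 * π)]
    exact hp2.mul_exp_sub_lt_of_deriv_eq_mul two_pi_pos hs2 hd2 hpos2 heq2 (by positivity)
      (fun s => neg_mul_le_neg_mul_of_le hk hkm (by positivity)
        (by nlinarith [hu1 (s - τ / lam), hu2 (s - τ / lam)])) t

/-- A priori lower bounds for solutions of the parametrized system (PA). -/
theorem lotka_volterra_apriori_lower_bound
    (a11 a12 a21 a22 b1 b2 lam α τ : ℝ)
    (hA0 : 0 < a11 ∧ 0 < a12 ∧ 0 < a21 ∧ 0 < a22)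
    (hb1 : 0 < b1) (hb2 : 0 < b2)
    (hlam : 0 < lam) (hα : α ∈ Set.Icc (0:ℝ) 1) (hτ : 0 < τ)
    (x1 x2 : ℝ → ℝ) (hx1 : ContDiff ℝ 1 x1) (hx2 : ContDiff ℝ 1 x2)
    (hp1 : Function.Periodic x1 (2 * π)) (hp2 : Function.Periodic x2 (2 * π))
    (hm1 : (∫ t in (0:ℝ)..(2 * π), x1 t) = 0)
    (hm2 : (∫ t in (0:ℝ)..(2 * π), x2 t) = 0)
    (hb1' : ∀ t : ℝ, -b1 < x1 t) (hb2' : ∀ t : ℝ, -b2 < x2 t)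
    (heq1 : ∀ t : ℝ, deriv x1 t =
      -(α * lam) * (a11 * x1 (t - τ / lam) + a12 * x2 (t - τ / lam))
        * (b1 + x1 t))
    (heq2 : ∀ t : ℝ, deriv x2 t =
      -(α * lam) * (a21 * x1 (t - τ / lam) + a22 * x2 (t - τ / lam))
        * (b2 + x2 t))
    (d3 d4 : ℝ)
    (hd3 : d3 = b1 * Real.exp (2 * π * lam * (a11 * b1 + a12 * b2)) - b1)
    (hd4 : d4 = b2 * Real.exp (2 * π * lam * (a21 * b1 + a22 * b2)) - b2) :
    ∀ t : ℝ,
      (x1 t > b1 * Real.exp (-(2 * π * lam * (a11 * d3 + a12 * d4))) - b1 ∧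
        b1 * Real.exp (-(2 * π * lam * (a11 * d3 + a12 * d4))) - b1 > -b1) ∧
      (x2 t > b2 * Real.exp (-(2 * π * lam * (a21 * d3 + a22 * d4))) - b2 ∧
        b2 * Real.exp (-(2 * π * lam * (a21 * d3 + a22 * d4))) - b2 > -b2) :=
  lotka_volterra_apriori_lower_bound_general a11 a12 a21 a22 b1 b2 lam α τ hA0 hb1 hb2 hlam hα x1 x2
    hx1 hx2 hp1 hp2 hm1 hm2 hb1' hb2' heq1 heq2 d3 d4 hd3 hd4
end

section
/- Assume (A0): aᵢⱼ > 0 for all i,j ∈ {1,2} and b₁, b₂ > 0. Fix 0 < λ₁ < λ₂ and τ ≥ 1. Then there exists m₀ > 0 such that for every λ ∈ [λ₁, λ₂], every α ∈ [0,1], and every pair x₁, x₂ : ℝ → ℝ of continuously differentiable 2π-periodic functions with zero mean over [0,2π], xᵢ(t) > −bᵢ for all t, satisfying x₁'(t) = −αλ(a₁₁x₁(t−τ/λ) + a₁₂x₂(t−τ/λ))(b₁ + x₁(t)) and x₂'(t) = −αλ(a₂₁x₁(t−τ/λ) + a₂₂x₂(t−τ/λ))(b₂ + x₂(t)) for all t,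 the derivatives x₁', x₂' are themselves differentiable and |xᵢ'(t)| < m₀ and |xᵢ''(t)| < m₀ for all t ∈ ℝ and i = 1,2. -/
open Real

/-!
Write `yᵢ = bᵢ + xᵢ > 0`. Since `xⱼ > -bⱼ` and `aᵢⱼ ≥ 0`, the delayed coefficient
`-αλ (aᵢ₁ x₁ + aᵢ₂ x₂)` is at most `C = λ₂ (∑ aᵢⱼ) (b₁ + b₂)`, so `yᵢ' ≤ C yᵢ` and
`log yᵢ - C t` is decreasing. A zero-mean continuous function vanishes somewhere, so `yᵢ = bᵢ` at
some point, and by periodicity `0 < yᵢ ≤ bᵢ exp (2π C)` everywhere. With `xᵢ` bounded uniformly,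
the equation bounds `xᵢ'`, and its differentiated form (product rule) bounds `xᵢ''`.
-/

theorem Function.Periodic.le_mul_exp_of_deriv_le {y : ℝ → ℝ} {T C : ℝ}
    (hy : Function.Periodic y T) (hT : 0 < T) (hC : 0 ≤ C) (hdiff : Differentiable ℝ y)
    (hpos : ∀ t, 0 < y t) (hderiv : ∀ t, deriv y t ≤ C * y t) (s t : ℝ) :
    y t ≤ y s * exp (C * T) := by
  have hlog : ∀ t, HasDerivAt (fun t => log (y t) - C * t) (deriv y t / y t - C) t := fun t =>
    (((hdiff t).hasDerivAt.log (hpos t).ne').sub ((hasDerivAt_id' t).const_mul C)).congr_deriv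
      (by rw [mul_one])
  have hanti : Antitone fun t => log (y t) - C * t :=
    antitone_of_deriv_nonpos (fun t => (hlog t).differentiableAt) fun t => by
      rw [(hlog t).deriv, sub_nonpos, div_le_iff₀ (hpos t)]
      exact hderiv t
  obtain ⟨t', ⟨hst', ht's⟩, hyt⟩ := hy.exists_mem_Ico hT t s
  have hgrowth : log (y t') ≤ log (y s) + C * T := by
    have := hanti hst'
    nlinarith
  calc y t = exp (log (y t')) := by rw [hyt, exp_log (hpos t')]
    _ ≤ exp (log (y s) + C * T) := exp_le_exp.2 hgrowth
    _ = y s * exp (C * T) := by rw [exp_add, exp_log (hpos s)]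

theorem abs_neg_mul_add_mul_mul_le {c p q u v z Λ B₁ B₂ : ℝ} (hc : 0 ≤ c) (hp : 0 ≤ p)
    (hq : 0 ≤ q) (hΛ : c * (p + q) ≤ Λ) (hu : |u| ≤ B₁) (hv : |v| ≤ B₁) (hz : |z| ≤ B₂) :
    |-c * (p * u + q * v) * z| ≤ Λ * B₁ * B₂ := by
  have hB₁ : 0 ≤ B₁ := (abs_nonneg u).trans hu
  have hpq : |p * u + q * v| ≤ (p + q) * B₁ := by
    calc |p * u + q * v| ≤ p * |u| + q * |v| := by
          simpa [abs_mul, abs_of_nonneg hp, abs_of_nonneg hq] using abs_add_le (p * u) (q * v)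
      _ ≤ (p + q) * B₁ := by nlinarith
  rw [abs_mul, abs_mul, abs_neg, abs_of_nonneg hc]
  calc c * |p * u + q * v| * |z| ≤ c * ((p + q) * B₁) * B₂ := by gcongr
    _ ≤ Λ * B₁ * B₂ := by
      nlinarith [mul_nonneg (mul_nonneg (sub_nonneg.2 hΛ) hB₁) ((abs_nonneg z).trans hz)]

section DelayEquation

variable {x u v : ℝ → ℝ} {c p q b r : ℝ}

theorem abs_le_of_delay_eq
    (hx : ∀ t, deriv x t = -c * (p * u (t - r) + q * v (t - r)) * (b + x t))
    (hc : 0 ≤ c) (hp : 0 ≤ p) (hq : 0 ≤ q) {bu bv Λ : ℝ} (hΛ : c * (p + q) ≤ Λ)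
    (hbu : 0 ≤ bu) (hbv : 0 ≤ bv) (hu : ∀ t, -bu < u t) (hv : ∀ t, -bv < v t)
    (hxb : ∀ t, -b < x t) (hdiff : Differentiable ℝ x) {T : ℝ} (hT : 0 < T)
    (hper : Function.Periodic x T) (hmean : ∫ t in (0:ℝ)..T, x t = 0) {B : ℝ}
    (hB : b * exp (Λ * (bu + bv) * T) ≤ B) :
    (∀ t, |x t| ≤ B) ∧ ∀ t, |b + x t| ≤ B := by
  obtain ⟨t₀, -, ht₀⟩ := exists_eq_interval_average hT.ne hdiff.continuous.continuousOn
  rw [interval_average_eq_div, hmean, zero_div] at ht₀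
  have hb : 0 < b := by simpa [ht₀] using hxb t₀
  have hΛ₀ : 0 ≤ Λ := (by positivity : 0 ≤ c * (p + q)).trans hΛ
  have hexp : 1 ≤ exp (Λ * (bu + bv) * T) := one_le_exp (by positivity)
  have hderiv : ∀ t, deriv (fun t => b + x t) t ≤ Λ * (bu + bv) * (b + x t) := fun t => by
    have hforce : -c * (p * u (t - r) + q * v (t - r)) ≤ Λ * (bu + bv) := by
      nlinarith [hu (t - r), hv (t - r), mul_nonneg hc hp, mul_nonneg hc hq]
    rw [deriv_const_add, hx t]
    exact mul_le_mul_of_nonneg_right hforce (by linarith [hxb t])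
  have hyper : Function.Periodic (fun t => b + x t) T := fun t => by simp only [hper t]
  have hup : ∀ t, b + x t ≤ b * exp (Λ * (bu + bv) * T) := fun t => by
    simpa [ht₀] using hyper.le_mul_exp_of_deriv_le hT (by positivity)
      (hdiff.const_add b) (fun t => by linarith [hxb t]) hderiv t₀ t
  refine ⟨fun t => abs_le.2 ⟨?_, ?_⟩, fun t => abs_le.2 ⟨?_, ?_⟩⟩ <;>
    nlinarith [hxb t, hup t]

theorem abs_deriv_le_of_delay_eq
    (hx : ∀ t, deriv x t = -c * (p * u (t - r) + q * v (t - r)) * (b + x t))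
    (hc : 0 ≤ c) (hp : 0 ≤ p) (hq : 0 ≤ q) {Λ B : ℝ} (hΛ : c * (p + q) ≤ Λ)
    (hu : ∀ t, |u t| ≤ B) (hv : ∀ t, |v t| ≤ B) (hbx : ∀ t, |b + x t| ≤ B) (t : ℝ) :
    |deriv x t| ≤ Λ * B * B := by
  rw [hx t]
  exact abs_neg_mul_add_mul_mul_le hc hp hq hΛ (hu _) (hv _) (hbx t)

theorem hasDerivAt_deriv_of_delay_eq
    (hx : ∀ t, deriv x t = -c * (p * u (t - r) + q * v (t - r)) * (b + x t))
    (hxd : Differentiable ℝ x) (hud : Differentiable ℝ u) (hvd : Differentiable ℝ v) (t : ℝ) :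
    HasDerivAt (deriv x) (-c * (p * deriv u (t - r) + q * deriv v (t - r)) * (b + x t)
      + -c * (p * u (t - r) + q * v (t - r)) * deriv x t) t := by
  have hshift : ∀ {w : ℝ → ℝ}, Differentiable ℝ w →
      HasDerivAt (fun s => w (s - r)) (deriv w (t - r)) t := fun hw =>
    (hw (t - r)).hasDerivAt.comp_sub_const t r
  refine HasDerivAt.congr_of_eventuallyEq ?_ (Filter.Eventually.of_forall hx)
  exact ((((hshift hud).const_mul p).add ((hshift hvd).const_mul q)).const_mul (-c)).mul
    ((hxd t).hasDerivAt.const_add b)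

theorem abs_deriv_deriv_le_of_delay_eq
    (hx : ∀ t, deriv x t = -c * (p * u (t - r) + q * v (t - r)) * (b + x t))
    (hxd : Differentiable ℝ x) (hud : Differentiable ℝ u) (hvd : Differentiable ℝ v)
    (hc : 0 ≤ c) (hp : 0 ≤ p) (hq : 0 ≤ q) {Λ B D : ℝ} (hΛ : c * (p + q) ≤ Λ)
    (hu : ∀ t, |u t| ≤ B) (hv : ∀ t, |v t| ≤ B) (hbx : ∀ t, |b + x t| ≤ B)
    (hu' : ∀ t, |deriv u t| ≤ D) (hv' : ∀ t, |deriv v t| ≤ D) (hx' : ∀ t, |deriv x t| ≤ D)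
    (t : ℝ) :
    |deriv (deriv x) t| ≤ Λ * D * B + Λ * B * D := by
  rw [(hasDerivAt_deriv_of_delay_eq hx hxd hud hvd t).deriv]
  exact (abs_add_le _ _).trans (add_le_add
    (abs_neg_mul_add_mul_mul_le hc hp hq hΛ (hu' _) (hv' _) (hbx t))
    (abs_neg_mul_add_mul_mul_le hc hp hq hΛ (hu _) (hv _) (hx' t)))

end DelayEquation

theorem lotka_volterra_derivative_bounds_general
    (a11 a12 a21 a22 b1 b2 lam1 lam2 τ : ℝ)
    (hA0 : 0 < a11 ∧ 0 < a12 ∧ 0 < a21 ∧ 0 < a22)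
    (hb1 : 0 < b1) (hb2 : 0 < b2)
    (hlam1 : 0 < lam1) (hlam12 : lam1 < lam2) :
    ∃ m0 : ℝ, 0 < m0 ∧
      ∀ lam α : ℝ, lam ∈ Set.Icc lam1 lam2 → α ∈ Set.Icc (0:ℝ) 1 →
      ∀ x1 x2 : ℝ → ℝ,
        ContDiff ℝ 1 x1 → ContDiff ℝ 1 x2 →
        Function.Periodic x1 (2 * π) → Function.Periodic x2 (2 * π) →
        (∫ t in (0:ℝ)..(2 * π), x1 t) = 0 →
        (∫ t in (0:ℝ)..(2 * π), x2 t) = 0 →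
        (∀ t : ℝ, -b1 < x1 t) → (∀ t : ℝ, -b2 < x2 t) →
        (∀ t : ℝ, deriv x1 t =
          -(α * lam) * (a11 * x1 (t - τ / lam) + a12 * x2 (t - τ / lam))
            * (b1 + x1 t)) →
        (∀ t : ℝ, deriv x2 t =
          -(α * lam) * (a21 * x1 (t - τ / lam) + a22 * x2 (t - τ / lam))
            * (b2 + x2 t)) →
        Differentiable ℝ (deriv x1) ∧ Differentiable ℝ (deriv x2) ∧
        ∀ t : ℝ,
          |deriv x1 t| < m0 ∧ |deriv x2 t| < m0 ∧
          |deriv (deriv x1) t| < m0 ∧ |deriv (deriv x2) t| < m0 := by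
  obtain ⟨ha11, ha12, ha21, ha22⟩ := hA0
  have hlam2 : 0 < lam2 := hlam1.trans hlam12
  set Λ := lam2 * (a11 + a12 + a21 + a22)
  set E := exp (Λ * (b1 + b2) * (2 * π))
  set B := (b1 + b2) * E
  set D := Λ * B * B
  refine ⟨D + (Λ * D * B + Λ * B * D) + 1, by positivity, ?_⟩
  intro lam α hlam hα x1 x2 hx1 hx2 hper1 hper2 hmean1 hmean2 hxb1 hxb2 heq1 heq2
  have hlam0 : 0 ≤ lam := (hlam1.trans_le hlam.1).le
  have hc : 0 ≤ α * lam := mul_nonneg hα.1 hlam0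
  have hcle : α * lam ≤ lam2 := (mul_le_of_le_one_left hlam0 hα.2).trans hlam.2
  have hΛ1 : α * lam * (a11 + a12) ≤ Λ := mul_le_mul hcle (by linarith) (by positivity) hlam2.le
  have hΛ2 : α * lam * (a21 + a22) ≤ Λ := mul_le_mul hcle (by linarith) (by positivity) hlam2.le
  have hd1 : Differentiable ℝ x1 := hx1.differentiable one_ne_zero
  have hd2 : Differentiable ℝ x2 := hx2.differentiable one_ne_zero
  have hE1 : b1 * E ≤ B := mul_le_mul_of_nonneg_right (by linarith) (exp_pos _).le
  have hE2 : b2 * E ≤ B := mul_le_mul_of_nonneg_right (by linarith) (exp_pos _).le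
  obtain ⟨hx1B, hy1B⟩ := abs_le_of_delay_eq heq1 hc ha11.le ha12.le hΛ1 hb1.le hb2.le
    hxb1 hxb2 hxb1 hd1 two_pi_pos hper1 hmean1 hE1
  obtain ⟨hx2B, hy2B⟩ := abs_le_of_delay_eq heq2 hc ha21.le ha22.le hΛ2 hb1.le hb2.le
    hxb1 hxb2 hxb2 hd2 two_pi_pos hper2 hmean2 hE2
  have hx1' := abs_deriv_le_of_delay_eq heq1 hc ha11.le ha12.le hΛ1 hx1B hx2B hy1B
  have hx2' := abs_deriv_le_of_delay_eq heq2 hc ha21.le ha22.le hΛ2 hx1B hx2B hy2B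
  have hx1'' := abs_deriv_deriv_le_of_delay_eq heq1 hd1 hd1 hd2 hc ha11.le ha12.le hΛ1
    hx1B hx2B hy1B hx1' hx2' hx1'
  have hx2'' := abs_deriv_deriv_le_of_delay_eq heq2 hd2 hd1 hd2 hc ha21.le ha22.le hΛ2
    hx1B hx2B hy2B hx1' hx2' hx2'
  have hD : 0 ≤ D := by positivity
  have hM : 0 ≤ Λ * D * B + Λ * B * D := by positivity
  refine ⟨fun t => (hasDerivAt_deriv_of_delay_eq heq1 hd1 hd1 hd2 t).differentiableAt,
    fun t => (hasDerivAt_deriv_of_delay_eq heq2 hd2 hd1 hd2 t).differentiableAt,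
    fun t => ⟨?_, ?_, ?_, ?_⟩⟩ <;> linarith [hx1' t, hx2' t, hx1'' t, hx2'' t]

/-- Uniform a priori bounds on first and second derivatives of solutions of
the parametrized system (PA), for parameters λ ∈ [λ₁,λ₂], α ∈ [0,1]. -/
theorem lotka_volterra_derivative_bounds
    (a11 a12 a21 a22 b1 b2 lam1 lam2 τ : ℝ)
    (hA0 : 0 < a11 ∧ 0 < a12 ∧ 0 < a21 ∧ 0 < a22)
    (hb1 : 0 < b1) (hb2 : 0 < b2)
    (hlam1 : 0 < lam1) (hlam12 : lam1 < lam2) (hτ : 1 ≤ τ) :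
    ∃ m0 : ℝ, 0 < m0 ∧
      ∀ lam α : ℝ, lam ∈ Set.Icc lam1 lam2 → α ∈ Set.Icc (0:ℝ) 1 →
      ∀ x1 x2 : ℝ → ℝ,
        ContDiff ℝ 1 x1 → ContDiff ℝ 1 x2 →
        Function.Periodic x1 (2 * π) → Function.Periodic x2 (2 * π) →
        (∫ t in (0:ℝ)..(2 * π), x1 t) = 0 →
        (∫ t in (0:ℝ)..(2 * π), x2 t) = 0 →
        (∀ t : ℝ, -b1 < x1 t) → (∀ t : ℝ, -b2 < x2 t) →
        (∀ t : ℝ, deriv x1 t =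
          -(α * lam) * (a11 * x1 (t - τ / lam) + a12 * x2 (t - τ / lam))
            * (b1 + x1 t)) →
        (∀ t : ℝ, deriv x2 t =
          -(α * lam) * (a21 * x1 (t - τ / lam) + a22 * x2 (t - τ / lam))
            * (b2 + x2 t)) →
        Differentiable ℝ (deriv x1) ∧ Differentiable ℝ (deriv x2) ∧
        ∀ t : ℝ,
          |deriv x1 t| < m0 ∧ |deriv x2 t| < m0 ∧
          |deriv (deriv x1) t| < m0 ∧ |deriv (deriv x2) t| < m0 :=
  lotka_volterra_derivative_bounds_general a11 a12 a21 a22 b1 b2 lam1 lam2 τ hA0 hb1 hb2 hlam1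
    hlam12
end

section
/- Let c > 0 and τ' > 0. The scalar delay differential equation u'(t) = −c·u(t − τ') has a continuously differentiable 2π-periodic solution u : ℝ → ℝ that is not identically zero if and only if there exist k ∈ ℕ, k ≥ 1, and n ∈ ℕ ∪ {0} such that c = k and kτ' = π/2 + 2nπ. Moreover, in that case every 2π-periodic solution u is of the form u(t) = c₁cos(kt) + c₂sin(kt) for some c₁, c₂ ∈ ℝ with k = c. -/
/-!
Taking the `m`-th Fourier coefficient of `u' = -c u(· - τ)` gives `(i m + c e^{-i m τ}) û(m) = 0`.
A nontrivial solution has some `û(m) ≠ 0`, so `i m + c e^{-i m τ} = 0`: taking absolute values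
gives `|m| = c`, and then `e^{i |m| τ} = i`, i.e. `|m| τ ≡ π / 2 (mod 2π)`. Conversely `cos (k t)`
solves the equation under that condition, and when `c = k` every Fourier coefficient of a solution
other than `û(±k)` vanishes, so `u` is a combination of `e^{± i k t}` by uniqueness of Fourier series.
-/

open Real Function intervalIntegral
open scoped Complex
open Complex (I)

/-- The `m`-th Fourier coefficient of `g` over `[0, 2π]`, without the factor `1 / (2π)`. -/
noncomputable def fourierCoeffTwoPi (g : ℝ → ℂ) (m : ℤ) : ℂ :=
  ∫ t in (0 : ℝ)..2 * π, cexp (-(m * t * I)) * g t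

lemma periodic_exp_int_mul_I (j : ℤ) : Periodic (fun t : ℝ => cexp (j * t * I)) (2 * π) := by
  intro t
  push_cast
  rw [show (j : ℂ) * (t + 2 * π) * I = j * t * I + j * (2 * π * I) by ring, Complex.exp_add,
    Complex.exp_int_mul_two_pi_mul_I, mul_one]

lemma Function.Periodic.exp_neg_int_mul_I_mul {g : ℝ → ℂ} (hper : Periodic g (2 * π)) (m : ℤ) :
    Periodic (fun t : ℝ => cexp (-(m * t * I)) * g t) (2 * π) := by
  have := (periodic_exp_int_mul_I (-m)).mul hper
  simp only [Int.cast_neg, neg_mul] at this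
  exact this

lemma integral_exp_int_mul_I (j : ℤ) :
    ∫ t in (0 : ℝ)..2 * π, cexp (j * t * I) = if j = 0 then ((2 * π : ℝ) : ℂ) else 0 := by
  split_ifs with hj
  · simp [hj]
  · have hjI : (j : ℂ) * I ≠ 0 := by simp [hj]
    have hend := periodic_exp_int_mul_I j 0
    simp only [zero_add, Complex.ofReal_zero, mul_zero, zero_mul, Complex.exp_zero] at hend
    simp_rw [mul_right_comm _ _ I]
    rw [integral_exp_mul_complex hjI, mul_right_comm, hend]
    simp

lemma fourierCoeffTwoPi_const_mul (a : ℂ) (g : ℝ → ℂ) (m : ℤ) :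
    fourierCoeffTwoPi (fun t => a * g t) m = a * fourierCoeffTwoPi g m := by
  simp only [fourierCoeffTwoPi, mul_left_comm _ a, integral_const_mul]

lemma fourierCoeffTwoPi_sub {f g : ℝ → ℂ} (hf : Continuous f) (hg : Continuous g) (m : ℤ) :
    fourierCoeffTwoPi (fun t => f t - g t) m = fourierCoeffTwoPi f m - fourierCoeffTwoPi g m := by
  simp only [fourierCoeffTwoPi, mul_sub]
  exact integral_sub ((by fun_prop : Continuous _).intervalIntegrable _ _)
    ((by fun_prop : Continuous _).intervalIntegrable _ _)

lemma fourierCoeffTwoPi_sum_exp (s : Finset ℤ) (a : ℤ → ℂ) (m : ℤ) :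
    fourierCoeffTwoPi (fun t => ∑ j ∈ s, a j * cexp (j * t * I)) m =
      if m ∈ s then 2 * π * a m else 0 := by
  have hprod : ∀ t : ℝ, cexp (-(m * t * I)) * ∑ j ∈ s, a j * cexp (j * t * I) =
      ∑ j ∈ s, a j * cexp ((j - m : ℤ) * t * I) := by
    intro t
    simp only [Finset.mul_sum, mul_left_comm _ (a _), ← Complex.exp_add]
    push_cast
    ring_nf
  simp only [fourierCoeffTwoPi, hprod]
  rw [integral_finsetSum fun j _ => (by fun_prop : Continuous _).intervalIntegrable _ _]
  simp only [integral_const_mul, integral_exp_int_mul_I, sub_eq_zero, mul_ite, mul_zero,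
    Finset.sum_ite_eq']
  push_cast
  split_ifs <;> ring

lemma fourierCoeffTwoPi_of_hasDerivAt {g g' : ℝ → ℂ} (hg : ∀ t, HasDerivAt g (g' t) t)
    (hg' : Continuous g') (hper : Periodic g (2 * π)) (m : ℤ) :
    fourierCoeffTwoPi g' m = m * I * fourierCoeffTwoPi g m := by
  have hexp : ∀ t : ℝ, HasDerivAt (fun t : ℝ => cexp (-(m * t * I)))
      (-(m * I) * cexp (-(m * t * I))) t := by
    intro t
    convert ((hasDerivAt_id' (t : ℂ)).const_mul (-(m * I))).cexp.comp_ofReal using 1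
    · ext s; ring_nf
    · ring_nf
  have hparts := integral_mul_deriv_eq_deriv_mul (a := 0) (b := 2 * π) (fun t _ => hexp t)
    (fun t _ => hg t) ((by fun_prop : Continuous _).intervalIntegrable _ _)
    (hg'.intervalIntegrable _ _)
  have hend := hper.exp_neg_int_mul_I_mul m 0
  rw [zero_add] at hend
  beta_reduce at hend
  rw [fourierCoeffTwoPi, hparts, hend, sub_self, zero_sub, fourierCoeffTwoPi,
    ← integral_const_mul, ← integral_neg]
  congr 1
  ext t
  ring

lemma fourierCoeffTwoPi_comp_sub {g : ℝ → ℂ} (hper : Periodic g (2 * π)) (τ : ℝ) (m : ℤ) :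
    fourierCoeffTwoPi (fun t => g (t - τ)) m = cexp (-(m * τ * I)) * fourierCoeffTwoPi g m := by
  have hshift : ∀ t : ℝ, cexp (-(m * t * I)) * g (t - τ) =
      cexp (-(m * τ * I)) * (cexp (-(m * ↑(t - τ) * I)) * g (t - τ)) := by
    intro t
    rw [← mul_assoc, ← Complex.exp_add]
    push_cast
    ring_nf
  have hperiod := (hper.exp_neg_int_mul_I_mul m).intervalIntegral_add_eq (-τ) 0
  rw [zero_add, ← sub_eq_neg_add] at hperiod
  simp only [fourierCoeffTwoPi, hshift, integral_const_mul]
  rw [integral_comp_sub_right (fun t => cexp (-(m * t * I)) * g t), zero_sub, hperiod]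

lemma eq_zero_of_fourierCoeffTwoPi_eq_zero {g : ℝ → ℂ} (hg : Continuous g)
    (hper : Periodic g (2 * π)) (h : ∀ m, fourierCoeffTwoPi g m = 0) (t : ℝ) : g t = 0 := by
  have : Fact (0 < 2 * π) := ⟨two_pi_pos⟩
  set G : C(AddCircle (2 * π), ℂ) := ⟨hper.lift, hg.quotient_liftOn' _⟩
  have hG : ∀ n, fourierCoeff G n = 0 := by
    intro n
    rw [fourierCoeff_eq_intervalIntegral _ n 0, zero_add]
    convert smul_zero _
    rw [← h n, fourierCoeffTwoPi]
    refine integral_congr fun x _ => ?_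
    simp only [fourier_coe_apply, smul_eq_mul]
    congr 2
    field_simp [Real.pi_ne_zero]
    push_cast
    ring
  have hsum := has_pointwise_sum_fourier_series_of_summable
    (summable_of_ne_finset_zero (s := ∅) fun n _ => hG n) (t : AddCircle (2 * π))
  simp only [hG, zero_smul] at hsum
  exact (hper.lift_coe t).symm.trans (hsum.unique hasSum_zero)

lemma eq_sum_exp_of_fourierCoeffTwoPi_eq_zero {g : ℝ → ℂ} (hg : Continuous g)
    (hper : Periodic g (2 * π)) (s : Finset ℤ) (h : ∀ m ∉ s, fourierCoeffTwoPi g m = 0) (t : ℝ) :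
    g t = ∑ j ∈ s, fourierCoeffTwoPi g j / (2 * π) * cexp (j * t * I) := by
  set p : ℝ → ℂ := fun t => ∑ j ∈ s, fourierCoeffTwoPi g j / (2 * π) * cexp (j * t * I)
  have hp : Continuous p := by fun_prop
  have hpper : Periodic p (2 * π) := fun t => by
    simp only [p]
    simp_rw [periodic_exp_int_mul_I _ t]
  suffices g t - p t = 0 from sub_eq_zero.1 this
  refine eq_zero_of_fourierCoeffTwoPi_eq_zero (hg.sub hp) (hper.sub hpper) (fun m => ?_) t
  change fourierCoeffTwoPi (fun t => g t - p t) m = 0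
  rw [fourierCoeffTwoPi_sub hg hp, fourierCoeffTwoPi_sum_exp]
  split_ifs with hm
  · field_simp [Real.pi_ne_zero]
    ring
  · rw [h m hm, sub_zero]

lemma exists_nat_eq_of_exp_mul_I_eq_I {x : ℝ} (hx : 0 < x) (h : cexp (x * I) = I) :
    ∃ n : ℕ, x = π / 2 + 2 * n * π := by
  have hsin : Real.sin x = 1 := by simpa using congrArg Complex.im h
  obtain ⟨j, hj⟩ := Real.sin_eq_one_iff.1 hsin
  have hj0 : 0 ≤ j := by
    by_contra! hneg
    have : (j : ℝ) ≤ -1 := by exact_mod_cast Int.le_sub_one_of_lt hneg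
    nlinarith [pi_pos]
  lift j to ℕ using hj0 with n
  exact ⟨n, by rw [← hj]; push_cast; ring⟩

/-- The characteristic function `λ + c e^{-λτ}` of the delay equation, at `λ = m i`. -/
noncomputable def delaySymbol (c τ : ℝ) (m : ℤ) : ℂ :=
  m * I + c * cexp (-(m * τ * I))

lemma natAbs_eq_of_delaySymbol_eq_zero {c τ : ℝ} (hc : 0 ≤ c) {m : ℤ}
    (h : delaySymbol c τ m = 0) : (m.natAbs : ℝ) = c := by
  have hnorm : |(m : ℝ)| = |c| := by
    simpa [Complex.norm_exp] using congrArg (‖·‖) (eq_neg_of_add_eq_zero_left h)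
  rw [Nat.cast_natAbs, Int.cast_abs, hnorm, abs_of_nonneg hc]

lemma exp_mul_I_eq_I_of_delaySymbol_eq_zero {k : ℕ} (hk : k ≠ 0) {τ : ℝ} {m : ℤ}
    (hm : m.natAbs = k) (h : delaySymbol k τ m = 0) : cexp ((k * τ : ℝ) * I) = I := by
  have hk' : (k : ℂ) ≠ 0 := by exact_mod_cast hk
  refine mul_left_cancel₀ hk' ?_
  push_cast
  rcases Int.natAbs_eq_iff.1 hm with rfl | rfl <;> simp only [delaySymbol] at h <;> push_cast at h
  · have hinv : cexp (k * τ * I) * cexp (-(k * τ * I)) = 1 := by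
      rw [← Complex.exp_add, add_neg_cancel, Complex.exp_zero]
    linear_combination (-I * cexp (k * τ * I)) * h + k * I * hinv
      + k * cexp (k * τ * I) * Complex.I_sq
  · simp only [neg_mul, neg_neg] at h
    linear_combination h

lemma exists_of_delaySymbol_eq_zero {c τ : ℝ} (hc : 0 < c) (hτ : 0 < τ) {m : ℤ}
    (h : delaySymbol c τ m = 0) :
    ∃ k n : ℕ, 1 ≤ k ∧ c = k ∧ k * τ = π / 2 + 2 * n * π := by
  have hck : c = m.natAbs := (natAbs_eq_of_delaySymbol_eq_zero hc.le h).symm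
  have hk : 0 < m.natAbs := by exact_mod_cast hck ▸ hc
  have hexp := exp_mul_I_eq_I_of_delaySymbol_eq_zero hk.ne' rfl (hck ▸ h)
  obtain ⟨n, hn⟩ := exists_nat_eq_of_exp_mul_I_eq_I (by positivity) hexp
  exact ⟨m.natAbs, n, hk, hck, hn⟩

structure IsPeriodicDelaySolution (c τ : ℝ) (u : ℝ → ℝ) : Prop where
  contDiff : ContDiff ℝ 1 u
  periodic : Periodic u (2 * π)
  deriv_eq : ∀ t, deriv u t = -c * u (t - τ)

namespace IsPeriodicDelaySolution

variable {c τ : ℝ} {u : ℝ → ℝ}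

lemma continuous_ofReal (hu : IsPeriodicDelaySolution c τ u) : Continuous fun t => (u t : ℂ) :=
  Complex.continuous_ofReal.comp hu.contDiff.continuous

lemma periodic_ofReal (hu : IsPeriodicDelaySolution c τ u) :
    Periodic (fun t => (u t : ℂ)) (2 * π) :=
  fun t => congrArg _ (hu.periodic t)

lemma delaySymbol_mul_fourierCoeffTwoPi (hu : IsPeriodicDelaySolution c τ u) (m : ℤ) :
    delaySymbol c τ m * fourierCoeffTwoPi (fun t => u t) m = 0 := by
  have hderiv : ∀ t, HasDerivAt (fun t => (u t : ℂ)) ((deriv u t : ℝ) : ℂ) t := fun t =>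
    ((hu.contDiff.differentiable one_ne_zero t).hasDerivAt).ofReal_comp
  have hparts := fourierCoeffTwoPi_of_hasDerivAt hderiv
    (Complex.continuous_ofReal.comp (hu.contDiff.continuous_deriv le_rfl)) hu.periodic_ofReal m
  have hdelay : fourierCoeffTwoPi (fun t => ((deriv u t : ℝ) : ℂ)) m =
      -c * cexp (-(m * τ * I)) * fourierCoeffTwoPi (fun t => u t) m := by
    simp only [hu.deriv_eq, Complex.ofReal_mul, Complex.ofReal_neg]
    rw [fourierCoeffTwoPi_const_mul, fourierCoeffTwoPi_comp_sub hu.periodic_ofReal, ← mul_assoc]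
  rw [delaySymbol]
  linear_combination hdelay - hparts

lemma exists_delaySymbol_eq_zero (hu : IsPeriodicDelaySolution c τ u) (hu0 : ¬ ∀ t, u t = 0) :
    ∃ m, delaySymbol c τ m = 0 := by
  contrapose! hu0
  intro t
  exact_mod_cast eq_zero_of_fourierCoeffTwoPi_eq_zero hu.continuous_ofReal hu.periodic_ofReal
    (fun m => (mul_eq_zero.1 (hu.delaySymbol_mul_fourierCoeffTwoPi m)).resolve_left (hu0 m)) t

lemma exists_eq_cos_sin {k : ℕ} (hk : k ≠ 0) (hu : IsPeriodicDelaySolution k τ u) :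
    ∃ c₁ c₂ : ℝ, ∀ t, u t = c₁ * Real.cos (k * t) + c₂ * Real.sin (k * t) := by
  have hcoeff : ∀ m ∉ ({(k : ℤ), -(k : ℤ)} : Finset ℤ), fourierCoeffTwoPi (fun t => u t) m = 0 := by
    intro m hm
    refine (mul_eq_zero.1 (hu.delaySymbol_mul_fourierCoeffTwoPi m)).resolve_left fun h => hm ?_
    have : m.natAbs = k := by exact_mod_cast natAbs_eq_of_delaySymbol_eq_zero k.cast_nonneg h
    simp only [Finset.mem_insert, Finset.mem_singleton]
    omega
  set a := fourierCoeffTwoPi (fun t => u t) k / (2 * π)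
  set b := fourierCoeffTwoPi (fun t => u t) (-k) / (2 * π)
  refine ⟨a.re + b.re, b.im - a.im, fun t => ?_⟩
  have h := eq_sum_exp_of_fourierCoeffTwoPi_eq_zero hu.continuous_ofReal hu.periodic_ofReal _
    hcoeff t
  rw [Finset.sum_pair (by omega)] at h
  have e₁ : cexp ((k : ℤ) * t * I) = cexp ((k * t : ℝ) * I) := by push_cast; ring_nf
  have e₂ : cexp ((-(k : ℤ) : ℤ) * t * I) = cexp ((-(k * t) : ℝ) * I) := by push_cast; ring_nf
  rw [e₁, e₂] at h
  have hre := congrArg Complex.re h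
  simp only [Complex.ofReal_re, Complex.add_re, Complex.mul_re, Complex.exp_ofReal_mul_I_re,
    Complex.exp_ofReal_mul_I_im, Real.cos_neg, Real.sin_neg] at hre
  rw [hre]
  ring

end IsPeriodicDelaySolution

lemma isPeriodicDelaySolution_cos {k n : ℕ} {τ : ℝ} (h : k * τ = π / 2 + 2 * n * π) :
    IsPeriodicDelaySolution k τ fun t => Real.cos (k * t) where
  contDiff := by fun_prop
  periodic t := by
    beta_reduce
    rw [show (k : ℝ) * (t + 2 * π) = k * t + k * (2 * π) by ring, Real.cos_add_nat_mul_two_pi]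
  deriv_eq t := by
    have hphase : k * (t - τ) = k * t - π / 2 - n * (2 * π) := by rw [mul_sub, h]; ring
    rw [((hasDerivAt_id' t).const_mul (k : ℝ)).cos.deriv, hphase, Real.cos_sub_nat_mul_two_pi,
      Real.cos_sub_pi_div_two]
    ring

/-- Characterization of nontrivial 2π-periodic solutions of the scalar delay
equation u'(t) = −c·u(t−τ'), together with the form of all solutions in the
resonant case. -/
theorem scalar_delay_periodic_characterization
    (c τ' : ℝ) (hc : 0 < c) (hτ : 0 < τ') :
    ((∃ u : ℝ → ℝ, ContDiff ℝ 1 u ∧ Function.Periodic u (2 * π) ∧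
        (¬ ∀ t : ℝ, u t = 0) ∧
        (∀ t : ℝ, deriv u t = -c * u (t - τ'))) ↔
      (∃ (k : ℕ) (n : ℕ), 1 ≤ k ∧ c = (k : ℝ) ∧
        (k : ℝ) * τ' = π / 2 + 2 * (n : ℝ) * π)) ∧
    (∀ (k n : ℕ), 1 ≤ k → c = (k : ℝ) →
      (k : ℝ) * τ' = π / 2 + 2 * (n : ℝ) * π →
      ∀ u : ℝ → ℝ, ContDiff ℝ 1 u → Function.Periodic u (2 * π) →
        (∀ t : ℝ, deriv u t = -c * u (t - τ')) →
        ∃ c1 c2 : ℝ, ∀ t : ℝ,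
          u t = c1 * Real.cos ((k : ℝ) * t) + c2 * Real.sin ((k : ℝ) * t)) := by
  refine ⟨⟨?_, ?_⟩, ?_⟩
  · rintro ⟨u, hu, hper, hu0, hde⟩
    obtain ⟨m, hm⟩ := IsPeriodicDelaySolution.exists_delaySymbol_eq_zero ⟨hu, hper, hde⟩ hu0
    exact exists_of_delaySymbol_eq_zero hc hτ hm
  · rintro ⟨k, n, -, rfl, h⟩
    obtain ⟨hu, hper, hde⟩ := isPeriodicDelaySolution_cos h
    exact ⟨_, hu, hper, fun hu0 => by simpa using hu0 0, hde⟩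
  · rintro k n hk rfl - u hu hper hde
    exact IsPeriodicDelaySolution.exists_eq_cos_sin (by omega) ⟨hu, hper, hde⟩
end

section
/- Let A = (aᵢⱼ) be a real 2×2 matrix with all aᵢⱼ > 0, let b₁, b₂ > 0, and assume the matrix B = [[b₁a₁₁, b₁a₁₂],[b₂a₂₁, b₂a₂₂]] has two distinct real positive eigenvalues μ₁ ≠ μ₂. Suppose τ > 0 satisfies τμᵢ ≠ π/2 + 2nπ for every n ∈ ℕ ∪ {0} and i = 1,2. Then for every λ > 0, the only continuously differentiable 2π-periodic solution (u,v) of the system u'(t) = −λb₁(a₁₁u(t−τ/λ) + a₁₂v(t−τ/λ)), v'(t) = −λb₂(a₂₁u(t−τ/λ) + a₂₂v(t−τ/λ)) is u ≡ v ≡ 0. -/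
/-!
For an eigenvalue `μ` of `B`, pairing `(u, v)` with the left eigenvector `(b₂a₂₁, μ - b₁a₁₁)` gives
`w = b₂a₂₁ u + (μ - b₁a₁₁) v`, a `2π`-periodic solution of the scalar delay equation
`w'(t) = -λμ w(t - τ/λ)`. Its Fourier coefficients satisfy `(i n + λμ e^{-i n τ/λ}) ŵₙ = 0`, and the
factor can only vanish if `|n| = λμ` and `sin (τμ) = 1`, which the non-resonance condition rules
out. Hence `w = 0` for both eigenvalues, and as `μ₁ ≠ μ₂` this forces `u = v = 0`.
-/

open Real

open Complex MeasureTheory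

section Fourier

variable {T : ℝ} [Fact (0 < T)]

theorem fourierCoeff_comp_sub {E : Type*} [NormedAddCommGroup E] [NormedSpace ℂ E]
    (f : AddCircle T → E) (d : AddCircle T) (n : ℤ) :
    fourierCoeff (fun x => f (x - d)) n = fourier (-n) d • fourierCoeff f n := by
  have hmul (x : AddCircle T) : fourier (-n) (x + d) = fourier (-n) d * fourier (-n) x := by
    simp only [fourier_apply, smul_add, AddCircle.toCircle_add, Circle.coe_mul, mul_comm]
  rw [fourierCoeff, fourierCoeff, ← integral_smul,
    ← integral_add_right_eq_self (fun x => fourier (-n) x • f (x - d)) d]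
  simp only [add_sub_cancel_right, hmul, mul_smul]

theorem fourierCoeff_lift_of_hasDerivAt {f f' : ℝ → ℂ} (hf : Function.Periodic f T)
    (hf' : Function.Periodic f' T) (hderiv : ∀ x, HasDerivAt f (f' x) x)
    (hint : IntervalIntegrable f' volume 0 T) (n : ℤ) :
    fourierCoeff (T := T) hf'.lift n = 2 * π * I * n / T * fourierCoeff (T := T) hf.lift n := by
  have hbdry : fourier (-n) (T : AddCircle T) * f T - fourier (-n) ((0 : ℝ) : AddCircle T) * f 0
      = 0 := by
    rw [AddCircle.coe_period, ← QuotientAddGroup.mk_zero, ← zero_add T, hf 0, sub_self]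
  have hparts := intervalIntegral.integral_mul_deriv_eq_deriv_mul
    (fun x _ => hasDerivAt_fourier_neg T n x) (fun x _ => hderiv x)
    ((map_continuous _).comp (AddCircle.continuous_mk' T) |>.const_mul _ |>.intervalIntegrable _ _)
    hint
  simp only [fourierCoeff_eq_intervalIntegral _ _ 0, zero_add, Function.Periodic.lift_coe,
    smul_eq_mul, real_smul]
  rw [hparts, hbdry, zero_sub]
  simp only [mul_assoc, intervalIntegral.integral_const_mul]
  ring

theorem ContinuousMap.eq_zero_of_fourierCoeff_eq_zero (f : C(AddCircle T, ℂ))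
    (hf : ∀ n, fourierCoeff f n = 0) : f = 0 := by
  have hzero : fourierCoeff f = 0 := funext hf
  have hsum := hasSum_fourier_series_of_summable (hzero ▸ summable_zero : Summable (fourierCoeff f))
  simp only [hzero, Pi.zero_apply, zero_smul] at hsum
  exact hsum.unique hasSum_zero

end Fourier

theorem Real.sin_ne_one_of_pos {x : ℝ} (hx : 0 < x) (hres : ∀ k : ℕ, x ≠ π / 2 + 2 * k * π) :
    Real.sin x ≠ 1 := by
  rw [Ne, Real.sin_eq_one_iff]
  rintro ⟨k, rfl⟩
  have hk : 0 ≤ k := by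
    by_contra! hk
    have : (k : ℝ) ≤ -1 := by exact_mod_cast Int.le_sub_one_of_lt hk
    nlinarith [pi_pos]
  have hcast : ((k.toNat : ℕ) : ℝ) = k := by exact_mod_cast Int.toNat_of_nonneg hk
  exact hres k.toNat (by rw [hcast]; ring)

theorem I_mul_add_mul_exp_ne_zero {c d : ℝ} (hc : 0 < c) (hd : 0 < d)
    (hres : ∀ k : ℕ, c * d ≠ π / 2 + 2 * k * π) (x : ℝ) :
    I * x + c * exp (-(x * d * I)) ≠ 0 := by
  intro h
  -- real and imaginary parts: `cos (x d) = 0` and `x = c sin (x d)`, so `x = ±c` and `sin (c d) = 1`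
  have hre := congrArg Complex.re h
  have him := congrArg Complex.im h
  simp only [add_re, mul_re, I_re, ofReal_re, zero_mul, I_im, ofReal_im, mul_zero, sub_self,
    exp_re, neg_re, sub_zero, mul_im, add_zero, mul_one, neg_zero, Real.exp_zero, neg_im,
    Real.cos_neg, one_mul, exp_im, Real.sin_neg, mul_neg, zero_add, zero_re, mul_eq_zero, add_im,
    zero_im] at hre him
  have hcos : Real.cos (x * d) = 0 := hre.resolve_left hc.ne'
  have hx : x = c * Real.sin (x * d) := by linarith
  have hsin : Real.sin (x * d) = 1 ∨ Real.sin (x * d) = -1 := by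
    have := Real.sin_sq_add_cos_sq (x * d)
    rw [hcos] at this
    exact sq_eq_one_iff.mp (by linarith)
  refine Real.sin_ne_one_of_pos (mul_pos hc hd) hres ?_
  rcases hsin with hsin | hsin
  · rwa [show x = c by rw [hx, hsin, mul_one]] at hsin
  · rw [show x = -c by rw [hx, hsin, mul_neg_one], neg_mul, Real.sin_neg] at hsin
    linarith

theorem fourierCoeff_lift_eq_zero_of_hasDerivAt_delay {W : ℝ → ℂ} {c d : ℝ} (hc : 0 < c)
    (hd : 0 < d) (hres : ∀ k : ℕ, c * d ≠ π / 2 + 2 * k * π) [Fact (0 < 2 * π)]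
    (hW : Function.Periodic W (2 * π)) (hderiv : ∀ t, HasDerivAt W (-c * W (t - d)) t) (n : ℤ) :
    fourierCoeff (T := 2 * π) hW.lift n = 0 := by
  have hW' : Function.Periodic (fun t => -c * W (t - d)) (2 * π) := fun t => by
    simp only [← sub_add_eq_add_sub, hW (t - d)]
  have hWcont : Continuous W := continuous_iff_continuousAt.mpr fun t => (hderiv t).continuousAt
  have hlift_delay : hW'.lift = fun x => -(c : ℂ) * hW.lift (x - (d : AddCircle (2 * π))) := by
    ext x
    induction x using QuotientAddGroup.induction_on
    rfl
  have h := fourierCoeff_lift_of_hasDerivAt hW hW' hderiv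
    ((continuous_const.mul (hWcont.comp (continuous_sub_right d))).intervalIntegrable _ _) n
  rw [hlift_delay, fourierCoeff.const_mul, fourierCoeff_comp_sub, fourier_coe_apply, smul_eq_mul] at h
  have hπ : (π : ℂ) ≠ 0 := ofReal_ne_zero.mpr pi_ne_zero
  have hexp : 2 * π * I * ((-n : ℤ) : ℂ) * d / ((2 * π : ℝ) : ℂ) = -((n : ℝ) * d * I) := by
    push_cast
    field_simp
  have hfreq : 2 * π * I * n / ((2 * π : ℝ) : ℂ) = I * (n : ℝ) := by
    push_cast
    field_simp
  rw [hexp, hfreq] at h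
  refine (mul_eq_zero.mp ?_).resolve_left (I_mul_add_mul_exp_ne_zero hc hd hres n)
  linear_combination -h

theorem Function.Periodic.eq_zero_of_hasDerivAt_delay {w : ℝ → ℝ} {c d : ℝ} (hc : 0 < c)
    (hd : 0 < d) (hres : ∀ k : ℕ, c * d ≠ π / 2 + 2 * k * π) (hw : Function.Periodic w (2 * π))
    (hderiv : ∀ t, HasDerivAt w (-c * w (t - d)) t) (t : ℝ) : w t = 0 := by
  have : Fact (0 < 2 * π) := ⟨two_pi_pos⟩
  have hW : Function.Periodic (fun t => (w t : ℂ)) (2 * π) := fun t => congrArg ofReal (hw t)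
  have hWcont : Continuous hW.lift := continuous_coinduced_dom.mpr <|
    continuous_ofReal.comp (continuous_iff_continuousAt.mpr fun t => (hderiv t).continuousAt)
  have hlift := ContinuousMap.eq_zero_of_fourierCoeff_eq_zero ⟨hW.lift, hWcont⟩
    (fourierCoeff_lift_eq_zero_of_hasDerivAt_delay hc hd hres hW
      fun t => by simpa using (hderiv t).ofReal_comp)
  simpa using congrArg (fun f => f (t : AddCircle (2 * π))) hlift

theorem hasDerivAt_eigencombination {a11 a12 a21 a22 b1 b2 κ d μ t : ℝ} {u v : ℝ → ℝ}
    (hchar : μ * μ - (b1 * a11 + b2 * a22) * μ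
      + (b1 * a11 * (b2 * a22) - b1 * a12 * (b2 * a21)) = 0)
    (hu : HasDerivAt u (-(κ * b1) * (a11 * u (t - d) + a12 * v (t - d))) t)
    (hv : HasDerivAt v (-(κ * b2) * (a21 * u (t - d) + a22 * v (t - d))) t) :
    HasDerivAt (fun s => b2 * a21 * u s + (μ - b1 * a11) * v s)
      (-(κ * μ) * (b2 * a21 * u (t - d) + (μ - b1 * a11) * v (t - d))) t := by
  refine ((hu.const_mul (b2 * a21)).add (hv.const_mul (μ - b1 * a11))).congr_deriv ?_
  linear_combination (κ * v (t - d)) * hchar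

theorem linear_delay_system_only_trivial_general
    (a11 a12 a21 a22 b1 b2 μ1 μ2 τ : ℝ)
    (hA0 : 0 < a11 ∧ 0 < a12 ∧ 0 < a21 ∧ 0 < a22)
    (hb2 : 0 < b2)
    (hA2 : 0 < μ1 ∧ 0 < μ2 ∧ b1 * a11 + b2 * a22 = μ1 + μ2 ∧
      (b1 * a11) * (b2 * a22) - (b1 * a12) * (b2 * a21) = μ1 * μ2)
    (hμ : μ1 ≠ μ2)
    (hτ : 0 < τ)
    (hres1 : ∀ n : ℕ, τ * μ1 ≠ π / 2 + 2 * (n : ℝ) * π)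
    (hres2 : ∀ n : ℕ, τ * μ2 ≠ π / 2 + 2 * (n : ℝ) * π) :
    ∀ lam : ℝ, 0 < lam →
    ∀ u v : ℝ → ℝ, ContDiff ℝ 1 u → ContDiff ℝ 1 v →
      Function.Periodic u (2 * π) → Function.Periodic v (2 * π) →
      (∀ t : ℝ, deriv u t =
        -(lam * b1) * (a11 * u (t - τ / lam) + a12 * v (t - τ / lam))) →
      (∀ t : ℝ, deriv v t =
        -(lam * b2) * (a21 * u (t - τ / lam) + a22 * v (t - τ / lam))) →
      ∀ t : ℝ, u t = 0 ∧ v t = 0 := by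
  intro lam hlam u v hu hv huper hvper hequ heqv
  obtain ⟨-, -, ha21, -⟩ := hA0
  obtain ⟨hμ1, hμ2, htr, hdet⟩ := hA2
  have hcomb (μ : ℝ) (hμpos : 0 < μ) (hres : ∀ n : ℕ, τ * μ ≠ π / 2 + 2 * (n : ℝ) * π)
      (hchar : μ * μ - (b1 * a11 + b2 * a22) * μ
        + (b1 * a11 * (b2 * a22) - b1 * a12 * (b2 * a21)) = 0) (t : ℝ) :
      b2 * a21 * u t + (μ - b1 * a11) * v t = 0 := by
    refine Function.Periodic.eq_zero_of_hasDerivAt_delay (mul_pos hlam hμpos) (div_pos hτ hlam)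
      ?_ (fun s => by simp only [huper s, hvper s]) (fun s => hasDerivAt_eigencombination hchar
        (hequ s ▸ (hu.differentiable one_ne_zero s).hasDerivAt)
        (heqv s ▸ (hv.differentiable one_ne_zero s).hasDerivAt)) t
    rwa [show lam * μ * (τ / lam) = τ * μ by field_simp]
  intro t
  have h1 := hcomb μ1 hμ1 hres1 (by linear_combination -μ1 * htr + hdet) t
  have h2 := hcomb μ2 hμ2 hres2 (by linear_combination -μ2 * htr + hdet) t
  have hv0 : v t = 0 := by
    have : (μ1 - μ2) * v t = 0 := by linear_combination h1 - h2
    exact (mul_eq_zero.mp this).resolve_left (sub_ne_zero.mpr hμ)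
  rw [hv0, mul_zero, add_zero] at h1
  exact ⟨(mul_eq_zero.mp h1).resolve_left (mul_pos hb2 ha21).ne', hv0⟩

/-- Under the non-resonance condition on τ, the linear delay system (with
γ = 1) has only the trivial 2π-periodic solution, for every λ > 0. -/
theorem linear_delay_system_only_trivial
    (a11 a12 a21 a22 b1 b2 μ1 μ2 τ : ℝ)
    (hA0 : 0 < a11 ∧ 0 < a12 ∧ 0 < a21 ∧ 0 < a22)
    (hb1 : 0 < b1) (hb2 : 0 < b2)
    (hA2 : 0 < μ1 ∧ 0 < μ2 ∧ b1 * a11 + b2 * a22 = μ1 + μ2 ∧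
      (b1 * a11) * (b2 * a22) - (b1 * a12) * (b2 * a21) = μ1 * μ2)
    (hμ : μ1 ≠ μ2)
    (hτ : 0 < τ)
    (hres1 : ∀ n : ℕ, τ * μ1 ≠ π / 2 + 2 * (n : ℝ) * π)
    (hres2 : ∀ n : ℕ, τ * μ2 ≠ π / 2 + 2 * (n : ℝ) * π) :
    ∀ lam : ℝ, 0 < lam →
    ∀ u v : ℝ → ℝ, ContDiff ℝ 1 u → ContDiff ℝ 1 v →
      Function.Periodic u (2 * π) → Function.Periodic v (2 * π) →
      (∀ t : ℝ, deriv u t =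
        -(lam * b1) * (a11 * u (t - τ / lam) + a12 * v (t - τ / lam))) →
      (∀ t : ℝ, deriv v t =
        -(lam * b2) * (a21 * u (t - τ / lam) + a22 * v (t - τ / lam))) →
      ∀ t : ℝ, u t = 0 ∧ v t = 0 :=
  linear_delay_system_only_trivial_general a11 a12 a21 a22 b1 b2 μ1 μ2 τ hA0 hb2 hA2 hμ hτ hres1
    hres2
end

section
/- Let A = (aᵢⱼ) be a real 2×2 matrix satisfying (A1): ⟨Ax, x⟩ > 0 for all x ∈ ℝ² ∖ {0}. Let b₁, b₂ > 0, λ > 0 and θ ∈ [0,1]. Suppose x₁, x₂ : ℝ → ℝ are continuously differentiable 2π-periodic functions with ∫₀^{2π} x₁(t) dt = ∫₀^{2π} x₂(t) dt = 0, satisfying the undelayed system x₁'(t) = −λ(a₁₁x₁(t) + a₁₂x₂(t))(b₁ + θx₁(t)) and x₂'(t) = −λ(a₂₁x₁(t) + a₂₂x₂(t))(b₂ + θx₂(t)) for all t ∈ ℝ. Then x₁ ≡ x₂ ≡ 0. In particular, for zero delay the system has no non-stationary periodic solutions. -/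
/-!
Write each equation as `u' = k (b + θ u)` with `k = -λ (a u + c v)`. Then `h = b + θ u` solves the
linear equation `h' = θ k h`, so `h` keeps its sign, and at a zero of the zero-mean function `u` it
equals `b > 0`. Hence `Φ(s) = ∫₀ˢ r / (b + θ r) dr` is defined along the orbit, `(Φ ∘ u)' = u k`, and
periodicity gives `∫ u k = 0` over a period. Adding the two components, the integral of
`⟨A x, x⟩` over a period vanishes, and positive definiteness forces `x ≡ 0`.
-/

open Real Set intervalIntegral

theorem eq_mul_exp_integral_of_hasDerivAt {h k : ℝ → ℝ} (hk : Continuous k)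
    (hh : ∀ t, HasDerivAt h (k t * h t) t) (s t : ℝ) :
    h t = h s * exp (∫ τ in s..t, k τ) := by
  set K : ℝ → ℝ := fun t => ∫ τ in s..t, k τ
  have hG : ∀ t, HasDerivAt (fun t => h t * exp (-K t)) 0 t := fun t =>
    ((hh t).mul (hk.integral_hasStrictDerivAt s t).hasDerivAt.neg.exp).congr_deriv (by ring)
  have hconst := is_const_of_deriv_eq_zero (fun t => (hG t).differentiableAt)
    (fun t => (hG t).deriv) t s
  simp only [K, integral_same, neg_zero, exp_zero, mul_one] at hconst
  rw [← hconst, mul_assoc, ← exp_add, neg_add_cancel, exp_zero, mul_one]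

section AffineRate

variable {u k : ℝ → ℝ} {b θ : ℝ}

theorem add_mul_pos_of_hasDerivAt (hk : Continuous k) (hb : 0 < b)
    (hu : ∀ t, HasDerivAt u (k t * (b + θ * u t)) t) {s : ℝ} (hs : u s = 0) (t : ℝ) :
    0 < b + θ * u t := by
  have hh : ∀ t, HasDerivAt (fun t => b + θ * u t) (θ * k t * (b + θ * u t)) t := fun t =>
    (((hu t).const_mul θ).const_add b).congr_deriv (by ring)
  rw [eq_mul_exp_integral_of_hasDerivAt (hk.const_mul θ) hh s t, hs, mul_zero, add_zero]
  positivity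

theorem exists_hasDerivAt_comp_eq_mul (hu : ∀ t, HasDerivAt u (k t * (b + θ * u t)) t)
    (hpos : ∀ t, 0 < b + θ * u t) :
    ∃ Φ : ℝ → ℝ, ∀ t, HasDerivAt (fun t => Φ (u t)) (u t * k t) t := by
  rcases eq_or_ne θ 0 with rfl | hθ
  · have hb : b ≠ 0 := by simpa using (hpos 0).ne'
    refine ⟨fun x => x ^ 2 / (2 * b), fun t => ?_⟩
    exact (((hu t).pow 2).div_const (2 * b)).congr_deriv (by field_simp; ring)
  · refine ⟨fun x => (x - b / θ * log (b + θ * x)) / θ, fun t => ?_⟩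
    have hlog := (((hu t).const_mul θ).const_add b).log (hpos t).ne'
    exact (((hu t).sub (hlog.const_mul (b / θ))).div_const θ).congr_deriv
      (by field_simp [(hpos t).ne']; ring)

theorem intervalIntegral_mul_eq_zero_of_hasDerivAt {T : ℝ} (hk : Continuous k) (hb : 0 < b)
    (hu : ∀ t, HasDerivAt u (k t * (b + θ * u t)) t) (hT : 0 < T)
    (hp : Function.Periodic u T) (hm : ∫ t in 0..T, u t = 0) :
    ∫ t in 0..T, u t * k t = 0 := by
  have hcont : Continuous u := continuous_iff_continuousAt.2 fun t => (hu t).continuousAt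
  obtain ⟨s, -, hs⟩ := exists_eq_interval_average hT.ne hcont.continuousOn
  rw [interval_average_eq_div, hm, zero_div] at hs
  obtain ⟨Φ, hΦ⟩ := exists_hasDerivAt_comp_eq_mul hu (add_mul_pos_of_hasDerivAt hk hb hu hs)
  rw [integral_eq_sub_of_hasDerivAt (fun t _ => hΦ t) ((hcont.mul hk).intervalIntegrable _ _)]
  simpa [sub_eq_zero] using congrArg Φ (hp 0)

end AffineRate

theorem Function.Periodic.eq_zero_of_nonneg_of_intervalIntegral_eq_zero {f : ℝ → ℝ} {T : ℝ}
    (hf : Continuous f) (hp : Function.Periodic f T) (hT : 0 < T) (hnonneg : ∀ t, 0 ≤ f t)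
    (hI : ∫ t in 0..T, f t = 0) (t : ℝ) : f t = 0 := by
  obtain ⟨s, hs, hst⟩ := hp.exists_mem_Ico₀ hT t
  rw [hst]
  by_contra hne
  have hlt := integral_lt_integral_of_continuousOn_of_le_of_exists_lt hT continuousOn_const
    hf.continuousOn (fun x _ => hnonneg x)
    ⟨s, Ico_subset_Icc_self hs, lt_of_le_of_ne (hnonneg s) (Ne.symm hne)⟩
  simp [hI] at hlt

theorem lotka_volterra_no_delay_trivial_general
    (a11 a12 a21 a22 b1 b2 lam θ : ℝ)
    (hA1 : ∀ x y : ℝ, (x, y) ≠ (0, 0) →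
      0 < a11 * x ^ 2 + a12 * x * y + a21 * y * x + a22 * y ^ 2)
    (hb1 : 0 < b1) (hb2 : 0 < b2)
    (hlam : 0 < lam)
    (x1 x2 : ℝ → ℝ) (hx1 : ContDiff ℝ 1 x1) (hx2 : ContDiff ℝ 1 x2)
    (hp1 : Function.Periodic x1 (2 * π)) (hp2 : Function.Periodic x2 (2 * π))
    (hm1 : (∫ t in (0:ℝ)..(2 * π), x1 t) = 0)
    (hm2 : (∫ t in (0:ℝ)..(2 * π), x2 t) = 0)
    (heq1 : ∀ t : ℝ, deriv x1 t =
      -lam * (a11 * x1 t + a12 * x2 t) * (b1 + θ * x1 t))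
    (heq2 : ∀ t : ℝ, deriv x2 t =
      -lam * (a21 * x1 t + a22 * x2 t) * (b2 + θ * x2 t)) :
    ∀ t : ℝ, x1 t = 0 ∧ x2 t = 0 := by
  have hT : 0 < 2 * π := by positivity
  have hc1 := hx1.continuous
  have hc2 := hx2.continuous
  have I1 := intervalIntegral_mul_eq_zero_of_hasDerivAt (by fun_prop) hb1
    (fun t => heq1 t ▸ (hx1.differentiable one_ne_zero t).hasDerivAt) hT hp1 hm1
  have I2 := intervalIntegral_mul_eq_zero_of_hasDerivAt (by fun_prop) hb2
    (fun t => heq2 t ▸ (hx2.differentiable one_ne_zero t).hasDerivAt) hT hp2 hm2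
  set P : ℝ → ℝ := fun t =>
    a11 * x1 t ^ 2 + a12 * x1 t * x2 t + a21 * x2 t * x1 t + a22 * x2 t ^ 2
  have hPint : ∫ t in 0..2 * π, P t = 0 := by
    have hsum : -lam * ∫ t in 0..2 * π, P t = 0 := calc
      _ = ∫ t in 0..2 * π, x1 t * (-lam * (a11 * x1 t + a12 * x2 t))
            + x2 t * (-lam * (a21 * x1 t + a22 * x2 t)) := by
        rw [← integral_const_mul]
        exact integral_congr fun t _ => by ring
      _ = 0 := by
        rw [integral_add (by apply Continuous.intervalIntegrable; fun_prop)
          (by apply Continuous.intervalIntegrable; fun_prop), I1, I2, add_zero]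
    simpa [hlam.ne'] using hsum
  have hPnonneg : ∀ t, 0 ≤ P t := fun t => by
    by_cases h : (x1 t, x2 t) = (0, 0)
    · obtain ⟨h1, h2⟩ := Prod.mk.inj h
      simp [P, h1, h2]
    · exact (hA1 _ _ h).le
  have hP := Function.Periodic.eq_zero_of_nonneg_of_intervalIntegral_eq_zero (by fun_prop)
    (fun t => by simp only [P, hp1 t, hp2 t]) hT hPnonneg hPint
  intro t
  by_contra h
  exact (hA1 _ _ (by simpa using h)).ne' (hP t)

/-- In the zero-delay case the homotopy system has no non-stationary periodic
solutions: every zero-mean 2π-periodic solution vanishes identically. -/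
theorem lotka_volterra_no_delay_trivial
    (a11 a12 a21 a22 b1 b2 lam θ : ℝ)
    (hA1 : ∀ x y : ℝ, (x, y) ≠ (0, 0) →
      0 < a11 * x ^ 2 + a12 * x * y + a21 * y * x + a22 * y ^ 2)
    (hb1 : 0 < b1) (hb2 : 0 < b2)
    (hlam : 0 < lam) (hθ : θ ∈ Set.Icc (0:ℝ) 1)
    (x1 x2 : ℝ → ℝ) (hx1 : ContDiff ℝ 1 x1) (hx2 : ContDiff ℝ 1 x2)
    (hp1 : Function.Periodic x1 (2 * π)) (hp2 : Function.Periodic x2 (2 * π))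
    (hm1 : (∫ t in (0:ℝ)..(2 * π), x1 t) = 0)
    (hm2 : (∫ t in (0:ℝ)..(2 * π), x2 t) = 0)
    (heq1 : ∀ t : ℝ, deriv x1 t =
      -lam * (a11 * x1 t + a12 * x2 t) * (b1 + θ * x1 t))
    (heq2 : ∀ t : ℝ, deriv x2 t =
      -lam * (a21 * x1 t + a22 * x2 t) * (b2 + θ * x2 t)) :
    ∀ t : ℝ, x1 t = 0 ∧ x2 t = 0 :=
  lotka_volterra_no_delay_trivial_general a11 a12 a21 a22 b1 b2 lam θ hA1 hb1 hb2 hlam x1 x2 hx1 hx2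
    hp1 hp2 hm1 hm2 heq1 heq2
end

section
/- Let b > 0 and c ∈ ℝ. Let g : ℝ → ℝ be a continuous 2π-periodic function with ∫₀^{2π} g(t) dt = 0, and let x : ℝ → ℝ be a continuously differentiable 2π-periodic function with x(t) > −b for all t, satisfying x'(t) = g(t)(b + x(t)) − c for all t ∈ ℝ. Then c = 0. -/
open Real MeasureTheory

theorem intervalIntegral.integral_eq_zero_of_hasDerivAt_of_periodic {F f : ℝ → ℝ} {T : ℝ}
    (hF : ∀ t, HasDerivAt F (f t) t) (hFp : Function.Periodic F T)
    (hf : IntervalIntegrable f volume 0 T) :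
    ∫ t in (0:ℝ)..T, f t = 0 := by
  rw [intervalIntegral.integral_eq_sub_of_hasDerivAt (fun t _ => hF t) hf, sub_eq_zero]
  simpa using hFp 0

theorem hasDerivAt_log_of_hasDerivAt_mul_sub {y g : ℝ → ℝ} {c t : ℝ}
    (hy : HasDerivAt y (g t * y t - c) t) (hyt : y t ≠ 0) :
    HasDerivAt (fun s => log (y s)) (g t - c / y t) t := by
  convert hy.log hyt using 1
  field_simp

/-- Integrating `(log y)' = g - c / y` over a period. -/
theorem mul_integral_inv_eq_integral_of_periodic {y g : ℝ → ℝ} {c T : ℝ}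
    (hg : IntervalIntegrable g volume 0 T) (hy : ∀ t, y t ≠ 0)
    (hyp : Function.Periodic y T) (hderiv : ∀ t, HasDerivAt y (g t * y t - c) t) :
    c * ∫ t in (0:ℝ)..T, (y t)⁻¹ = ∫ t in (0:ℝ)..T, g t := by
  have hy_cont : Continuous y := continuous_iff_continuousAt.2 fun t => (hderiv t).continuousAt
  have hc_div_y : IntervalIntegrable (fun t => c / y t) volume 0 T :=
    (continuous_const.div hy_cont hy).intervalIntegrable _ _
  have hzero : ∫ t in (0:ℝ)..T, (g t - c / y t) = 0 :=
    intervalIntegral.integral_eq_zero_of_hasDerivAt_of_periodic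
      (fun t => hasDerivAt_log_of_hasDerivAt_mul_sub (hderiv t) (hy t))
      (fun t => congrArg log (hyp t)) (hg.sub hc_div_y)
  rw [intervalIntegral.integral_sub hg hc_div_y, sub_eq_zero] at hzero
  simpa only [div_eq_mul_inv, intervalIntegral.integral_const_mul] using hzero.symm

theorem mean_correction_constant_vanishes_general
    (b c : ℝ) (g x : ℝ → ℝ)
    (hg : Continuous g)
    (hgm : (∫ t in (0:ℝ)..(2 * π), g t) = 0)
    (hx : ContDiff ℝ 1 x) (hxp : Function.Periodic x (2 * π))
    (hxb : ∀ t : ℝ, -b < x t)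
    (heq : ∀ t : ℝ, deriv x t = g t * (b + x t) - c) :
    c = 0 := by
  have hpos : ∀ t, 0 < b + x t := fun t => by linarith [hxb t]
  have hderiv : ∀ t, HasDerivAt (fun s => b + x s) (g t * (b + x t) - c) t := fun t =>
    heq t ▸ ((hx.differentiable one_ne_zero t).hasDerivAt.const_add b)
  have hmean := mul_integral_inv_eq_integral_of_periodic (hg.intervalIntegrable _ _)
    (fun t => (hpos t).ne') (fun t => congrArg (b + ·) (hxp t)) hderiv
  have hinv_pos : 0 < ∫ t in (0:ℝ)..(2 * π), (b + x t)⁻¹ :=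
    intervalIntegral.intervalIntegral_pos_of_pos_on
      (((continuous_const.add hx.continuous).inv₀ fun t => (hpos t).ne').intervalIntegrable _ _)
      (fun t _ => inv_pos.mpr (hpos t)) (by positivity)
  rw [hgm] at hmean
  exact (mul_eq_zero.mp hmean).resolve_right hinv_pos.ne'

/-- Vanishing of the mean-correction constant: if a 2π-periodic function x
with x(t) > −b satisfies x'(t) = g(t)(b + x(t)) − c for a zero-mean 2π-periodic
continuous g, then c = 0. -/
theorem mean_correction_constant_vanishes
    (b c : ℝ) (hb : 0 < b) (g x : ℝ → ℝ)
    (hg : Continuous g) (hgp : Function.Periodic g (2 * π))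
    (hgm : (∫ t in (0:ℝ)..(2 * π), g t) = 0)
    (hx : ContDiff ℝ 1 x) (hxp : Function.Periodic x (2 * π))
    (hxb : ∀ t : ℝ, -b < x t)
    (heq : ∀ t : ℝ, deriv x t = g t * (b + x t) - c) :
    c = 0 :=
  mean_correction_constant_vanishes_general b c g x hg hgm hx hxp hxb heq
end
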